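/- arXiv:2210.04013 — 6 statements merged into one kernel-verified Lean document; each statement's English description precedes it below -/
import Mathlib

section
/- Let 𝒳 be the set of all 2-element subsets of a 4-element set W (so |𝒳| = 6). For each T ⊆ W let Q(T) = {e ∈ 𝒳 : e ∩ T ≠ ∅}, and let 𝒜 = {Q(T) : T ⊆ W} be the family of all such subsets of 𝒳. Then 𝒜 is not decision-complete. (This is the decision set arising in the problem of finding two bad bottles among four by tasting mixtures.) -/
/-- A family `𝒜` of subsets of a finite set `𝒳` is *decision-complete* if for every
subset `S` of `𝒳` with `S ≠ ∅` and `S ≠ 𝒳`, either `S ∈ 𝒜` or `𝒳 \ S ∈ 𝒜`. -/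
def DecisionComplete {α : Type*} [DecidableEq α] (𝒳 : Finset α) (𝒜 : Finset (Finset α)) : Prop :=
  ∀ S : Finset α, S ⊆ 𝒳 → S ≠ ∅ → S ≠ 𝒳 → S ∈ 𝒜 ∨ 𝒳 \ S ∈ 𝒜

/-- The set of the `2`-element subsets of a `4`-element set `W`:
the possible pairs of bad bottles among four. -/
def badPairs : Finset (Finset (Fin 4)) :=
  (Finset.univ : Finset (Fin 4)).powersetCard 2

/-- The question associated with a tasting of the mixture of the bottles in `T ⊆ W`:
the set of pairs of bad bottles that meet `T`. -/
def tasteQuery (T : Finset (Fin 4)) : Finset (Finset (Fin 4)) :=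
  badPairs.filter fun e => (e ∩ T).Nonempty

/-- The decision set of the "two bad bottles among four" problem:
all questions obtainable by tasting a mixture of some subset of the bottles. -/
def tasteDecisionSet : Finset (Finset (Finset (Fin 4))) :=
  (Finset.univ : Finset (Fin 4)).powerset.image tasteQuery

/-- The decision set arising from tasting mixtures, in the problem of finding two bad bottles
among four, is not decision-complete. -/
theorem tasteDecisionSet_not_decisionComplete :
    ¬ DecisionComplete badPairs tasteDecisionSet := by
  intro h
  have := h ({({0,1} : Finset (Fin 4)), ({2,3} : Finset (Fin 4))} : Finset (Finset (Fin 4)))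
    (by decide) (by decide) (by decide)
  revert this
  decide
end

section
/- Let A and B be disjoint nonempty finite sets of integers. If any one of the following holds: (1) A is continuous, (2) B is continuous, (3) min A > max B, or (4) min B > max A, then there exists a continuous finite set of integers C such that (A ∪ B) ∖ C = A or (A ∪ B) ∖ C = B. (This is the sufficiency direction of the merging criterion in the DNA detection problem, where the decision set consists of all continuous sets: two decision-tree nodes with candidate sets A and B can be merged.) -/
/-- A finite set `S` of integers is *continuous* if it equals the integer interval
`[min S, max S] ∩ ℤ`, i.e. it contains every integer between its minimum and maximum.
(The empty set is vacuously continuous.) -/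
def IntContinuous (S : Finset ℤ) : Prop :=
  ∀ h : S.Nonempty, S = Finset.Icc (S.min' h) (S.max' h)

lemma icc_cont (a b : ℤ) : IntContinuous (Finset.Icc a b) := by
  intro h
  have hab := Finset.nonempty_Icc.mp h
  have h1 : (Finset.Icc a b).min' h = a := le_antisymm
    (Finset.min'_le _ _ (Finset.mem_Icc.mpr ⟨le_refl a, hab⟩))
    ((Finset.mem_Icc.mp (Finset.min'_mem _ h)).1)
  have h2 : (Finset.Icc a b).max' h = b := le_antisymm
    ((Finset.mem_Icc.mp (Finset.max'_mem _ h)).2)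
    (Finset.le_max' _ _ (Finset.mem_Icc.mpr ⟨hab, le_refl b⟩))
  rw [h1, h2]

lemma sdiff_helper (A B C : Finset ℤ) (hAC : A ⊆ C) (hBC : ∀ x ∈ B, x ∉ C) :
    (A ∪ B) \ C = B := by
  ext x
  simp only [Finset.mem_sdiff, Finset.mem_union]
  constructor
  · rintro ⟨hx | hx, hc⟩
    · exact absurd (hAC hx) hc
    · exact hx
  · intro hx
    exact ⟨Or.inr hx, hBC x hx⟩

/-- Merging criterion for the DNA detection problem: if `A` and `B` are disjoint nonempty
finite sets of integers, and `A` is continuous, or `B` is continuous, or `min A > max B`, or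
`min B > max A`, then there is a continuous set `C` with `(A ∪ B) \ C = A` or
`(A ∪ B) \ C = B`. -/
theorem dna_merge_criterion (A B : Finset ℤ) (hA : A.Nonempty) (hB : B.Nonempty)
    (hdisj : Disjoint A B)
    (h : IntContinuous A ∨ IntContinuous B ∨
      B.max' hB < A.min' hA ∨ A.max' hA < B.min' hB) :
    ∃ C : Finset ℤ, IntContinuous C ∧ ((A ∪ B) \ C = A ∨ (A ∪ B) \ C = B) := by
  have hsubA : A ⊆ Finset.Icc (A.min' hA) (A.max' hA) := fun x hx =>
    Finset.mem_Icc.mpr ⟨Finset.min'_le _ _ hx, Finset.le_max' _ _ hx⟩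
  have hsubB : B ⊆ Finset.Icc (B.min' hB) (B.max' hB) := fun x hx =>
    Finset.mem_Icc.mpr ⟨Finset.min'_le _ _ hx, Finset.le_max' _ _ hx⟩
  rcases h with hc | hc | hc | hc
  · refine ⟨A, ?_, Or.inr ?_⟩
    · rw [hc hA]; exact icc_cont _ _
    · exact sdiff_helper A B A (le_refl _) fun x hx hxA =>
        (Finset.disjoint_left.mp hdisj) hxA hx
  · refine ⟨B, ?_, Or.inl ?_⟩
    · rw [hc hB]; exact icc_cont _ _
    · rw [Finset.union_comm]
      exact sdiff_helper B A B (le_refl _) fun x hx hxB =>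
        (Finset.disjoint_left.mp hdisj) hx hxB
  · -- max B < min A, remove A: C = Icc (min A) (max A)
    refine ⟨Finset.Icc (A.min' hA) (A.max' hA), icc_cont _ _, Or.inr ?_⟩
    exact sdiff_helper A B _ hsubA fun x hx hxC => by
      have := (Finset.mem_Icc.mp hxC).1
      have := Finset.le_max' B x hx
      omega
  · refine ⟨Finset.Icc (B.min' hB) (B.max' hB), icc_cont _ _, Or.inl ?_⟩
    rw [Finset.union_comm]
    exact sdiff_helper B A _ hsubB fun x hx hxC => by
      have := (Finset.mem_Icc.mp hxC).1
      have := Finset.le_max' A x hx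
      omega
end

section
/- Let k ≥ 1 be an integer and let a, b : ℕ → ℝ be sequences satisfying: (1) b(i) ≥ 0 for all 1 ≤ i ≤ k+1; (2) a(i) = a(i+1) + b(i+1) for all 0 ≤ i ≤ k; (3) a(k+1) ≥ a(i) − b(i) for all 1 ≤ i ≤ k; and (4) b(k+1) ≥ 2^(−k). Then for every integer n with 1 ≤ n ≤ k, both (i) b(n) ≥ 2^(−n) and (ii) a(n−1) ≥ 2^(−(n−1)) + a(k+1) hold. -/
/-- Induction step of the GBSC length-bound proof: along the spine of a greedy binary
separation tree, with `a i` the mass below node `i(1)` and `b i` the mass below node `i(2)`,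
if each split is greedily optimal and `b (k+1) ≥ 2⁻ᵏ`, then for every `1 ≤ n ≤ k` we have
`b n ≥ 2⁻ⁿ` and `a (n-1) ≥ 2^(-(n-1)) + a (k+1)`. -/
theorem gbsc_spine_induction (k : ℕ) (hk : 1 ≤ k) (a b : ℕ → ℝ)
    (h1 : ∀ i : ℕ, 1 ≤ i → i ≤ k + 1 → 0 ≤ b i)
    (h2 : ∀ i : ℕ, i ≤ k → a i = a (i + 1) + b (i + 1))
    (h3 : ∀ i : ℕ, 1 ≤ i → i ≤ k → a (k + 1) ≥ a i - b i)
    (h4 : b (k + 1) ≥ (2 : ℝ) ^ (-(k : ℤ))) :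
    ∀ n : ℕ, 1 ≤ n → n ≤ k →
      b n ≥ (2 : ℝ) ^ (-(n : ℤ)) ∧
      a (n - 1) ≥ (2 : ℝ) ^ (-((n : ℤ) - 1)) + a (k + 1) := by
  have hdouble : ∀ m : ℤ, (2:ℝ) ^ m + (2:ℝ) ^ m = 2 ^ (m + 1) := by
    intro m
    rw [zpow_add₀ (two_ne_zero) m 1]
    ring
  have key : ∀ d n : ℕ, n + d = k → 1 ≤ n → a n ≥ (2:ℝ) ^ (-(n : ℤ)) + a (k + 1) := by
    intro d
    induction d with
    | zero =>
      intro n hn _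
      have hnk : n = k := by omega
      subst hnk
      have := h2 n le_rfl
      linarith
    | succ d ih =>
      intro n hn h1n
      have ha := ih (n + 1) (by omega) (by omega)
      have hb := h3 (n + 1) (by omega) (by omega)
      have h2n := h2 n (by omega)
      have e : (2:ℝ) ^ (-((n:ℤ) + 1)) + (2:ℝ) ^ (-((n:ℤ) + 1)) = 2 ^ (-(n:ℤ)) := by
        rw [hdouble]; congr 1; ring
      push_cast at ha
      linarith
  intro n hn1 hnk
  have ha := key (k - n) n (by omega) hn1
  have hb := h3 n hn1 hnk
  have h2n := h2 (n - 1) (by omega)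
  have hn' : n - 1 + 1 = n := by omega
  rw [hn'] at h2n
  have e : (2:ℝ) ^ (-(n:ℤ)) + (2:ℝ) ^ (-(n:ℤ)) = 2 ^ (-((n:ℤ) - 1)) := by
    rw [hdouble]; congr 1; ring
  constructor
  · linarith
  · linarith
end

section
/- Let k ≥ 1 be an integer and let a, b : ℕ → ℝ be sequences satisfying: (1) b(i) ≥ 0 for all 1 ≤ i ≤ k+1; (2) a(i) = a(i+1) + b(i+1) for all 0 ≤ i ≤ k; (3) a(k+1) ≥ a(i) − b(i) for all 1 ≤ i ≤ k; (4) b(k+1) ≥ 2^(−k); and (5) a(k+1) > 0. Then a(0) > 1. In particular, if additionally a(0) ≤ 1, a contradiction follows. -/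
/-- Contradiction underlying the GBSC length bound: along the spine of a greedy binary
separation tree, with `a i` the mass below node `i(1)` and `b i` the mass below node `i(2)`,
if each split is greedily optimal, `b (k+1) ≥ 2⁻ᵏ` and `a (k+1) > 0`, then the root mass
`a 0` exceeds `1`; in particular `a 0 ≤ 1` yields a contradiction. -/
theorem gbsc_spine_contradiction (k : ℕ) (hk : 1 ≤ k) (a b : ℕ → ℝ)
    (h1 : ∀ i : ℕ, 1 ≤ i → i ≤ k + 1 → 0 ≤ b i)
    (h2 : ∀ i : ℕ, i ≤ k → a i = a (i + 1) + b (i + 1))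
    (h3 : ∀ i : ℕ, 1 ≤ i → i ≤ k → a (k + 1) ≥ a i - b i)
    (h4 : b (k + 1) ≥ (2 : ℝ) ^ (-(k : ℤ)))
    (h5 : 0 < a (k + 1)) :
    1 < a 0 := by
  have key : ∀ j, j ≤ k → a (k - j) ≥ a (k + 1) + (2 : ℝ) ^ ((j : ℤ) - k) := by
    intro j
    induction j with
    | zero =>
      intro _
      have hak := h2 k le_rfl
      simp only [Nat.sub_zero, Nat.cast_zero, zero_sub]
      rw [hak]
      linarith
    | succ j ih =>
      intro hj
      have hjk : j ≤ k := Nat.le_of_succ_le hj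
      have hih := ih hjk
      have h1k : 1 ≤ k - j := by omega
      have heq : (k - (j + 1)) + 1 = k - j := by omega
      have hrec := h2 (k - (j + 1)) (by omega)
      rw [heq] at hrec
      have hb := h3 (k - j) h1k (by omega)
      have hpow : (2 : ℝ) ^ (((j : ℤ) + 1) - k) = 2 * (2 : ℝ) ^ ((j : ℤ) - k) := by
        rw [show ((j : ℤ) + 1) - k = ((j : ℤ) - k) + 1 by ring, zpow_add₀ (by norm_num : (2:ℝ) ≠ 0)]
        ring
      push_cast
      rw [hpow]
      linarith
  have h0 := key k le_rfl
  simp only [Nat.sub_self, sub_self, zpow_zero] at h0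
  linarith
end

section
/- Let c be a GBSC code for (𝒳, p). Then for every x ∈ 𝒳 and every positive integer n, if p(x) ≥ 2^(−n) then the codeword length |c(x)| satisfies |c(x)| ≤ n. Equivalently, |c(x)| ≤ ⌈−log₂ p(x)⌉ for every x ∈ 𝒳. -/
open Finset

/-- The set of symbols of `X` whose codeword (under `c`) has `w` as a prefix. -/
def codeS {α : Type*} [DecidableEq α] (X : Finset α) (c : α → List Bool)
    (w : List Bool) : Finset α :=
  X.filter fun x => w <+: c x

/-- The total probability of the symbols of `X` whose codeword has `w` as a prefix. -/
def codeP {α : Type*} [DecidableEq α] (X : Finset α) (p : α → ℝ) (c : α → List Bool)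
    (w : List Bool) : ℝ :=
  ∑ x ∈ codeS X c w, p x

/-- `c` is a binary prefix code on `X`: it is injective on `X` and no codeword is a
(proper) prefix of another codeword. -/
def IsPrefixCode {α : Type*} [DecidableEq α] (X : Finset α) (c : α → List Bool) : Prop :=
  Set.InjOn c X ∧ ∀ x ∈ X, ∀ y ∈ X, x ≠ y → ¬ (c x <+: c y)

/-- `c` is a greedy binary separation code (GBSC code) for `(X, p)`:
it is a prefix code on `X`; whenever `S(w)` is a singleton `{x}`, then `c x = w`; and
whenever `|S(w)| ≥ 2`, the probability split `|P(w0) - P(w1)|` is at most the imbalance of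
every binary partition of `S(w)`. -/
def IsGBSC {α : Type*} [DecidableEq α] (X : Finset α) (p : α → ℝ)
    (c : α → List Bool) : Prop :=
  IsPrefixCode X c ∧
  (∀ w : List Bool, ∀ x ∈ X, codeS X c w = {x} → c x = w) ∧
  (∀ w : List Bool, 2 ≤ (codeS X c w).card →
    ∀ A B : Finset α, Disjoint A B → A ∪ B = codeS X c w →
      |codeP X p c (w ++ [false]) - codeP X p c (w ++ [true])| ≤
        |(∑ x ∈ A, p x) - ∑ x ∈ B, p x|)

lemma mem_codeS' {α : Type*} [DecidableEq α] {X : Finset α} {c : α → List Bool}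
    {y : α} {w : List Bool} : y ∈ codeS X c w ↔ y ∈ X ∧ w <+: c y := Finset.mem_filter

lemma codeS_anti' {α : Type*} [DecidableEq α] (X : Finset α) (c : α → List Bool)
    {w w' : List Bool} (h : w <+: w') : codeS X c w' ⊆ codeS X c w := by
  intro y hy
  rw [mem_codeS'] at *
  exact ⟨hy.1, h.trans hy.2⟩

lemma take_prefix_take' {β : Type*} {l : List β} {m n : ℕ} (h : m ≤ n) :
    l.take m <+: l.take n := by
  have h1 : (l.take n).take m = l.take m := by
    rw [List.take_take, min_eq_left h]
  rw [← h1]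
  exact List.take_prefix _ _

lemma codeS_disj' {α : Type*} [DecidableEq α] (X : Finset α) (c : α → List Bool)
    (w : List Bool) :
    Disjoint (codeS X c (w ++ [false])) (codeS X c (w ++ [true])) := by
  rw [Finset.disjoint_left]
  intro y h0 h1
  rw [mem_codeS'] at h0 h1
  have h := List.prefix_of_prefix_length_le h0.2 h1.2 (by simp)
  have h2 := h.eq_of_length (by simp)
  simp at h2

lemma codeS_split' {α : Type*} [DecidableEq α] (X : Finset α) (c : α → List Bool)
    (hpc : IsPrefixCode X c) {x : α} (hx : x ∈ X) {k : ℕ} (hk : k < (c x).length) :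
    codeS X c ((c x).take k) =
      codeS X c ((c x).take k ++ [false]) ∪ codeS X c ((c x).take k ++ [true]) := by
  ext y
  simp only [mem_codeS', Finset.mem_union]
  constructor
  · rintro ⟨hyX, hpre⟩
    have hlen : ((c x).take k).length = k := by
      rw [List.length_take]; omega
    have hne : c y ≠ (c x).take k := by
      intro h
      have hpxy : c y <+: c x := h ▸ List.take_prefix k (c x)
      by_cases hxy : y = x
      · subst hxy
        have := congrArg List.length h
        rw [hlen] at this
        omega
      · exact hpc.2 y hyX x hx hxy hpxy
    have hklt : k < (c y).length := by
      have h1 : ((c x).take k).length ≤ (c y).length := hpre.length_le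
      rcases lt_or_eq_of_le h1 with h | h
      · omega
      · exact absurd (hpre.eq_of_length h).symm hne
    have h2 : (c y).take k = (c x).take k := by
      have h3 := List.prefix_iff_eq_take.mp hpre
      rw [hlen] at h3
      exact h3.symm
    have hpre' : (c x).take k ++ [(c y)[k]'hklt] <+: c y := by
      rw [← h2]
      have h3 : (c y).take (k+1) = (c y).take k ++ [(c y)[k]'hklt] := by
        rw [List.take_succ, List.getElem?_eq_getElem hklt]
        rfl
      rw [← h3]
      exact List.take_prefix _ _
    cases hb : (c y)[k]'hklt
    · left; exact ⟨hyX, by rwa [hb] at hpre'⟩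
    · right; exact ⟨hyX, by rwa [hb] at hpre'⟩
  · rintro (⟨hyX, hpre⟩ | ⟨hyX, hpre⟩) <;>
      exact ⟨hyX, (List.prefix_append _ _).trans hpre⟩

lemma codeS_self' {α : Type*} [DecidableEq α] (X : Finset α) (c : α → List Bool)
    (hpc : IsPrefixCode X c) {x : α} (hx : x ∈ X) :
    codeS X c (c x) = {x} := by
  ext y
  simp only [mem_codeS', Finset.mem_singleton]
  constructor
  · rintro ⟨hyX, hpre⟩
    by_contra hne
    exact hpc.2 x hx y hyX (fun h => hne h.symm) hpre
  · rintro rfl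
    exact ⟨hx, List.prefix_refl _⟩

/-- For a GBSC code, every symbol `x` with `p x ≥ 2⁻ⁿ` (for a positive integer `n`)
receives a codeword of length at most `n`; equivalently, the codeword length of `x` is at
most `⌈-log₂ (p x)⌉`. -/
theorem gbsc_codeword_length_le {α : Type*} [DecidableEq α]
    (X : Finset α) (hX : X.Nonempty) (p : α → ℝ)
    (hp : ∀ x ∈ X, 0 < p x) (hsum : ∑ x ∈ X, p x = 1)
    (c : α → List Bool) (hc : IsGBSC X p c) :
    ∀ x ∈ X,
      (∀ n : ℕ, 0 < n → (2 : ℝ) ^ (-(n : ℤ)) ≤ p x → (c x).length ≤ n) ∧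
      ((c x).length : ℤ) ≤ ⌈-Real.logb 2 (p x)⌉ := by
  intro x hx
  set L := (c x).length with hLdef
  have hpx : 0 < p x := hp x hx
  have hple : p x ≤ 1 := by
    rw [← hsum]
    exact Finset.single_le_sum (fun y hy => (hp y hy).le) hx
  by_cases hL0 : L = 0
  · refine ⟨fun n _ _ => hL0 ▸ Nat.zero_le n, ?_⟩
    rw [hL0]
    simp only [Nat.cast_zero]
    apply Int.ceil_nonneg
    have hlog : Real.logb 2 (p x) ≤ 0 := Real.logb_nonpos (by norm_num) hpx.le hple
    linarith
  -- Main case : L ≥ 1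
  have hL1 : 1 ≤ L := Nat.one_le_iff_ne_zero.mpr hL0
  set Q : ℕ → ℝ := fun k => codeP X p c ((c x).take k) with hQdef
  have hxS : ∀ k, x ∈ codeS X c ((c x).take k) :=
    fun k => mem_codeS'.mpr ⟨hx, List.take_prefix _ _⟩
  -- a second element in the last internal node
  obtain ⟨y, hyS, hyx⟩ : ∃ y ∈ codeS X c ((c x).take (L-1)), y ≠ x := by
    by_contra h
    push_neg at h
    have hsingle : codeS X c ((c x).take (L-1)) = {x} :=
      Finset.eq_singleton_iff_unique_mem.mpr ⟨hxS _, fun y hy => h y hy⟩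
    have hcx := hc.2.1 _ x hx hsingle
    have := congrArg List.length hcx
    rw [List.length_take] at this
    omega
  have hyX : y ∈ X := (mem_codeS'.mp hyS).1
  have hpy : 0 < p y := hp y hyX
  -- ρ := Q (L-1) - p x  bounds
  have hpair : p x + p y ≤ Q (L-1) := by
    have hsub : ({x, y} : Finset α) ⊆ codeS X c ((c x).take (L-1)) := by
      intro z hz
      rcases Finset.mem_insert.mp hz with rfl | hz
      · exact hxS _
      · rw [Finset.mem_singleton] at hz
        subst hz
        exact hyS
    calc p x + p y = ∑ z ∈ ({x, y} : Finset α), p z :=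
          (Finset.sum_pair (fun h => hyx h.symm)).symm
      _ ≤ ∑ z ∈ codeS X c ((c x).take (L-1)), p z :=
          Finset.sum_le_sum_of_subset_of_nonneg hsub
            (fun z hz _ => (hp z (Finset.filter_subset _ _ hz)).le)
      _ = Q (L-1) := rfl
  have hρy : p y ≤ Q (L-1) - p x := by linarith
  have hρpos : 0 < Q (L-1) - p x := by linarith
  -- cardinalities
  have hcard : ∀ k, k ≤ L - 1 → 2 ≤ (codeS X c ((c x).take k)).card := by
    intro k hk
    have hsub : codeS X c ((c x).take (L-1)) ⊆ codeS X c ((c x).take k) :=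
      codeS_anti' X c (take_prefix_take' hk)
    refine le_trans ?_ (Finset.card_le_card hsub)
    exact Finset.one_lt_card.mpr ⟨x, hxS _, y, hyS, fun h => hyx h.symm⟩
  -- splitting at each internal node
  have hsplit : ∀ k, k < L →
      Q k = codeP X p c ((c x).take k ++ [false]) + codeP X p c ((c x).take k ++ [true]) := by
    intro k hk
    show codeP X p c ((c x).take k) = _
    unfold codeP
    rw [codeS_split' X c hc.1 hx (hLdef ▸ hk), Finset.sum_union (codeS_disj' X c _)]
  have htake : ∀ k, k < L → ∃ b : Bool, (c x).take (k+1) = (c x).take k ++ [b] := by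
    intro k hk
    refine ⟨(c x)[k]'(by omega), ?_⟩
    rw [List.take_succ, List.getElem?_eq_getElem (by omega : k < (c x).length)]
    rfl
  -- the key step inequality
  have hstep : ∀ k, k + 2 ≤ L → 2 * Q (k+1) - (Q (L-1) - p x) ≤ Q k := by
    intro k hk2
    have hkL : k < L := by omega
    obtain ⟨b, hw1⟩ := htake k hkL
    set w := (c x).take k with hwdef
    have hQsplit := hsplit k hkL
    have hyk : y ∈ codeS X c ((c x).take (k+1)) :=
      codeS_anti' X c (take_prefix_take' (by omega : k + 1 ≤ L - 1)) hyS
    have hyb : y ∈ codeS X c (w ++ [b]) := hw1 ▸ hyk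
    have hsubb : codeS X c (w ++ [b]) ⊆ codeS X c w :=
      codeS_anti' X c (List.prefix_append _ _)
    set S := codeS X c w with hSdef
    set A := (S \ codeS X c (w ++ [b])) ∪ {y} with hAdef
    set B := (codeS X c (w ++ [b])).erase y with hBdef
    have hynot : y ∉ S \ codeS X c (w ++ [b]) := fun hcon =>
      (Finset.mem_sdiff.mp hcon).2 hyb
    have hdisj : Disjoint A B := by
      rw [hAdef, Finset.disjoint_union_left]
      constructor
      · exact Finset.disjoint_of_subset_right (Finset.erase_subset _ _) Finset.sdiff_disjoint
      · rw [Finset.disjoint_singleton_left, hBdef]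
        exact Finset.notMem_erase _ _
    have hunion : A ∪ B = codeS X c w := by
      rw [hAdef, Finset.union_assoc, ← Finset.insert_eq, hBdef,
        Finset.insert_erase hyb, ← hSdef]
      exact Finset.sdiff_union_of_subset hsubb
    have hgreedy := hc.2.2 w (hcard k (by omega)) A B hdisj hunion
    have hQk1 : Q (k+1) = codeP X p c (w ++ [b]) := by
      show codeP X p c ((c x).take (k+1)) = _
      rw [hw1]
    have hsumA : ∑ z ∈ A, p z = (Q k - Q (k+1)) + p y := by
      rw [hAdef, Finset.sum_union (Finset.disjoint_singleton_right.mpr hynot),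
        Finset.sum_singleton, Finset.sum_sdiff_eq_sub hsubb, hQk1]
      rfl
    have hsumB : ∑ z ∈ B, p z = Q (k+1) - p y := by
      rw [hBdef, Finset.sum_erase_eq_sub hyb, hQk1]
      rfl
    have habs : |2 * Q (k+1) - Q k| =
        |codeP X p c (w ++ [false]) - codeP X p c (w ++ [true])| := by
      rw [hQk1, hQsplit]
      cases b
      · congr 1; ring
      · rw [abs_sub_comm]; congr 1; ring
    rw [← habs, hsumA, hsumB] at hgreedy
    rcases abs_cases (2 * Q (k+1) - Q k) with ⟨h1, _⟩ | ⟨h1, h1'⟩ <;>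
      rcases abs_cases ((Q k - Q (k+1) + p y) - (Q (k+1) - p y)) with ⟨h2, _⟩ | ⟨h2, _⟩ <;>
      linarith
  -- downward induction along the path
  have hind : ∀ j, j ≤ L - 1 →
      2^j * p x + (Q (L-1) - p x) ≤ Q (L-1-j) := by
    intro j
    induction j with
    | zero =>
      intro _
      simp only [pow_zero, one_mul, Nat.sub_zero]
      linarith
    | succ j ih =>
      intro hj
      have hidx : L - 1 - j = (L - 1 - (j+1)) + 1 := by omega
      have h1 := ih (by omega)
      rw [hidx] at h1
      have h2 := hstep (L - 1 - (j+1)) (by omega)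
      have hpow : (2:ℝ)^(j+1) * p x = 2 * ((2:ℝ)^j * p x) := by ring
      linarith
  have hQ0 : Q 0 = 1 := by
    show codeP X p c ((c x).take 0) = 1
    rw [List.take_zero]
    unfold codeP
    rw [← hsum]
    congr 1
    unfold codeS
    exact Finset.filter_true_of_mem (fun z _ => List.nil_prefix)
  have hfinal := hind (L-1) (le_refl _)
  rw [Nat.sub_self, hQ0] at hfinal
  have key : (2:ℝ)^(L-1) * p x < 1 := by linarith
  constructor
  · -- part 1
    intro n hn hpn
    by_contra hcon
    push_neg at hcon
    have h1 : (2:ℝ)^n ≤ (2:ℝ)^(L-1) := by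
      apply pow_le_pow_right₀ (by norm_num)
      omega
    have hinv : (2:ℝ)^(-(n:ℤ)) = ((2:ℝ)^n)⁻¹ := by
      rw [zpow_neg, zpow_natCast]
    rw [hinv] at hpn
    have h2 : (1:ℝ) ≤ (2:ℝ)^n * p x := by
      calc (1:ℝ) = (2:ℝ)^n * ((2:ℝ)^n)⁻¹ := (mul_inv_cancel₀ (by positivity)).symm
        _ ≤ (2:ℝ)^n * p x := by
            apply mul_le_mul_of_nonneg_left hpn (by positivity)
    have h3 : (2:ℝ)^n * p x ≤ (2:ℝ)^(L-1) * p x :=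
      mul_le_mul_of_nonneg_right h1 hpx.le
    linarith
  · -- part 2
    have h2pos : (0:ℝ) < (2:ℝ)^(L-1) := by positivity
    have hinv : p x < ((2:ℝ)^(L-1))⁻¹ := by
      rw [← one_div, lt_div_iff₀ h2pos]
      nlinarith [key]
    have hcast : ((2:ℝ)^(L-1))⁻¹ = (2:ℝ) ^ ((1:ℝ) - L) := by
      rw [← Real.rpow_natCast 2 (L-1), ← Real.rpow_neg (by norm_num)]
      congr 1
      rw [Nat.cast_sub hL1]
      push_cast
      ring
    rw [hcast] at hinv
    have hlogb : Real.logb 2 (p x) < 1 - (L:ℝ) :=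
      (Real.logb_lt_iff_lt_rpow (by norm_num) hpx).mpr hinv
    have hceil : ((L:ℤ) - 1) < ⌈-Real.logb 2 (p x)⌉ := by
      rw [Int.lt_ceil]
      push_cast
      linarith
    omega
end

section
/- Let 𝒳 = {1, 2, 3, 4} with probabilities p(1) = 0.1, p(2) = 0.2, p(3) = 0.3, p(4) = 0.4. Then every GBSC code c for (𝒳, p) has expected code length L(c) = 2, whereas there exists a binary prefix code c′ on 𝒳 with expected code length L(c′) = 1.9. Hence GBSC does not always achieve the minimum expected code length. -/
/-! With positive weights a greedy split never leaves a side empty (splitting off one symbol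
is more balanced), so a set of two symbols is always split into two leaves. For the weights
`0.1, 0.2, 0.3, 0.4` (symbols `0, …, 3` of `Fin 4`) the partition `{0, 3} | {1, 2}` is perfectly
balanced, so the root is split into two halves of mass `1/2`; the only such halves are `{0, 3}`
and `{1, 2}`, so every codeword has length `2`. The Huffman code `111, 110, 10, 0` has expected
length `0.3 + 0.6 + 0.6 + 0.4 = 1.9`. -/

open Finset

/-- The distribution `(0.1, 0.2, 0.3, 0.4)` on a four-element alphabet. -/
noncomputable def pEx : Fin 4 → ℝ := ![0.1, 0.2, 0.3, 0.4]

section PrefixCode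

variable {α : Type*} [DecidableEq α] {X : Finset α} {p : α → ℝ} {c : α → List Bool}
  {w : List Bool}

lemma codeS_nil (X : Finset α) (c : α → List Bool) : codeS X c [] = X := by
  simp [codeS]

lemma disjoint_codeS_append (X : Finset α) (c : α → List Bool) (w : List Bool) :
    Disjoint (codeS X c (w ++ [false])) (codeS X c (w ++ [true])) := by
  rw [Finset.disjoint_left]
  intro x hf ht
  simp only [codeS, Finset.mem_filter] at hf ht
  have := (List.prefix_of_prefix_length_le hf.2 ht.2 (by simp)).eq_of_length (by simp)
  simp at this

lemma IsPrefixCode.codeS_append_union (hc : IsPrefixCode X c) (hw : 2 ≤ #(codeS X c w)) :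
    codeS X c (w ++ [false]) ∪ codeS X c (w ++ [true]) = codeS X c w := by
  ext x
  simp only [codeS, Finset.mem_union, Finset.mem_filter]
  constructor
  · rintro (⟨hx, h⟩ | ⟨hx, h⟩) <;> exact ⟨hx, (List.prefix_append w _).trans h⟩
  · rintro ⟨hx, t, ht⟩
    obtain ⟨y, hy, hyx⟩ := Finset.exists_mem_ne hw x
    simp only [codeS, Finset.mem_filter] at hy
    match t with
    | [] => exact absurd (by simpa [← ht] using hy.2) (hc.2 x hx y hy.1 hyx.symm)
    | false :: t => exact Or.inl ⟨hx, t, by simp [← ht]⟩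
    | true :: t => exact Or.inr ⟨hx, t, by simp [← ht]⟩

lemma IsPrefixCode.exists_mem_codeS_append (hc : IsPrefixCode X c) (hw : 2 ≤ #(codeS X c w))
    {x : α} (hx : x ∈ codeS X c w) : ∃ b, x ∈ codeS X c (w ++ [b]) := by
  rw [← hc.codeS_append_union hw, Finset.mem_union] at hx
  exact hx.elim (⟨false, ·⟩) (⟨true, ·⟩)

lemma IsPrefixCode.codeP_append_add (hc : IsPrefixCode X c) (hw : 2 ≤ #(codeS X c w)) :
    codeP X p c (w ++ [false]) + codeP X p c (w ++ [true]) = codeP X p c w := by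
  rw [codeP, codeP, ← Finset.sum_union (disjoint_codeS_append X c w),
    hc.codeS_append_union hw, codeP]

end PrefixCode

lemma Finset.exists_partition_abs_sub_lt_sum {α : Type*} [DecidableEq α] {S : Finset α}
    {p : α → ℝ} (hp : ∀ x ∈ S, 0 < p x) (hS : 2 ≤ #S) :
    ∃ A B : Finset α, Disjoint A B ∧ A ∪ B = S ∧
      |(∑ x ∈ A, p x) - ∑ x ∈ B, p x| < ∑ x ∈ S, p x := by
  obtain ⟨x, hx⟩ : S.Nonempty := Finset.card_pos.mp (by omega)
  have hrest : 0 < ∑ y ∈ S.erase x, p y :=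
    Finset.sum_pos (fun y hy => hp y (Finset.mem_of_mem_erase hy))
      (Finset.card_pos.mp (by rw [Finset.card_erase_of_mem hx]; omega))
  refine ⟨{x}, S.erase x, by simp, Finset.insert_erase hx, ?_⟩
  rw [← Finset.add_sum_erase S p hx, Finset.sum_singleton, abs_sub_lt_iff]
  constructor <;> linarith [hp x hx]

section GBSC

variable {α : Type*} [DecidableEq α] {X : Finset α} {p : α → ℝ} {c : α → List Bool}
  {w : List Bool}

lemma IsGBSC.codeP_append_eq_of_sum_eq (hG : IsGBSC X p c) (hw : 2 ≤ #(codeS X c w))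
    {A B : Finset α} (hAB : Disjoint A B) (hunion : A ∪ B = codeS X c w)
    (hsum : ∑ x ∈ A, p x = ∑ x ∈ B, p x) :
    codeP X p c (w ++ [false]) = codeP X p c (w ++ [true]) := by
  have h := hG.2.2 w hw A B hAB hunion
  rw [hsum, sub_self, abs_zero, abs_nonpos_iff, sub_eq_zero] at h
  exact h

lemma IsGBSC.codeS_append_nonempty (hG : IsGBSC X p c) (hp : ∀ x ∈ X, 0 < p x)
    (hw : 2 ≤ #(codeS X c w)) (b : Bool) : (codeS X c (w ++ [b])).Nonempty := by
  have hpS : ∀ x ∈ codeS X c w, 0 < p x := fun x hx => hp x (Finset.mem_filter.mp hx).1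
  obtain ⟨A, B, hAB, hunion, hlt⟩ := Finset.exists_partition_abs_sub_lt_sum hpS hw
  have hsplit := (hG.2.2 w hw A B hAB hunion).trans_lt hlt
  rw [← codeP, ← hG.1.codeP_append_add hw, abs_sub_lt_iff] at hsplit
  have hpos : 0 < codeP X p c (w ++ [b]) := by cases b <;> linarith
  exact Finset.nonempty_of_sum_ne_zero hpos.ne'

lemma IsGBSC.length_eq_of_card_eq_two (hG : IsGBSC X p c) (hp : ∀ x ∈ X, 0 < p x)
    (hw : #(codeS X c w) = 2) {x : α} (hx : x ∈ codeS X c w) :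
    (c x).length = w.length + 1 := by
  have hw' : 2 ≤ #(codeS X c w) := hw.ge
  obtain ⟨b, hxb⟩ := hG.1.exists_mem_codeS_append hw' hx
  have hcard := Finset.card_union_of_disjoint (disjoint_codeS_append X c w)
  rw [hG.1.codeS_append_union hw', hw] at hcard
  have hne := hG.codeS_append_nonempty hp hw'
  have hone : #(codeS X c (w ++ [b])) = 1 := by
    have := (hne false).card_pos
    have := (hne true).card_pos
    cases b <;> omega
  obtain ⟨y, hy⟩ := Finset.card_eq_one.mp hone
  rw [hy, Finset.mem_singleton] at hxb
  subst hxb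
  rw [hG.2.1 _ x (Finset.mem_filter.mp hx).1 hy, List.length_append, List.length_singleton]

end GBSC

lemma pEx_pos (x : Fin 4) : 0 < pEx x := by
  fin_cases x <;> norm_num [pEx]

lemma sum_pEx_eq (T : Finset (Fin 4)) : ∑ x ∈ T, pEx x = (∑ x ∈ T, ((x : ℕ) + 1) : ℕ) / 10 := by
  have h (x : Fin 4) : pEx x = ((x : ℕ) + 1 : ℕ) / 10 := by
    fin_cases x <;> norm_num [pEx]
  simp only [h, ← Finset.sum_div, Nat.cast_sum]

lemma sum_univ_pEx : ∑ x, pEx x = 1 := by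
  simp [Fin.sum_univ_four, pEx]
  norm_num

lemma card_eq_two_of_sum_pEx_eq_half {T : Finset (Fin 4)} (h : ∑ x ∈ T, pEx x = 1 / 2) :
    #T = 2 := by
  have hnat : ∑ x ∈ T, ((x : ℕ) + 1) = 5 := by
    rw [sum_pEx_eq] at h
    exact_mod_cast (by linarith : ((∑ x ∈ T, ((x : ℕ) + 1) : ℕ) : ℝ) = 5)
  clear h
  -- in tenths the weights are the naturals `x + 1`, which makes the claim decidable
  revert T
  decide

/-- For the distribution `(0.1, 0.2, 0.3, 0.4)` on four symbols, every GBSC code has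
expected length exactly `2`, while some binary prefix code has expected length `1.9`.
Hence GBSC does not always achieve the minimum expected code length. -/
theorem gbsc_not_optimal :
    (∀ c : Fin 4 → List Bool, IsGBSC (Finset.univ : Finset (Fin 4)) pEx c →
      ∑ x ∈ (Finset.univ : Finset (Fin 4)), pEx x * ((c x).length : ℝ) = 2) ∧
    (∃ c' : Fin 4 → List Bool, IsPrefixCode (Finset.univ : Finset (Fin 4)) c' ∧
      ∑ x ∈ (Finset.univ : Finset (Fin 4)), pEx x * ((c' x).length : ℝ) = 1.9) := by
  constructor
  · intro c hc
    have hroot : 2 ≤ #(codeS univ c []) := by simp [codeS_nil]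
    have hbal : codeP univ pEx c [false] = codeP univ pEx c [true] :=
      hc.codeP_append_eq_of_sum_eq (A := {0, 3}) (B := {1, 2}) hroot (by decide)
        (by rw [codeS_nil]; decide) (by
          rw [Finset.sum_pair (by decide), Finset.sum_pair (by decide)]; simp [pEx]; norm_num)
    have htotal : codeP univ pEx c [false] + codeP univ pEx c [true] = 1 := by
      rw [← List.nil_append [false], ← List.nil_append [true], hc.1.codeP_append_add hroot,
        codeP, codeS_nil, sum_univ_pEx]
    have hhalf (b : Bool) : #(codeS univ c [b]) = 2 := by
      apply card_eq_two_of_sum_pEx_eq_half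
      change codeP univ pEx c [b] = 1 / 2
      cases b <;> linarith
    have hlen (x : Fin 4) : (c x).length = 2 := by
      obtain ⟨b, hb⟩ := hc.1.exists_mem_codeS_append hroot (by simp [codeS_nil] : x ∈ _)
      exact hc.length_eq_of_card_eq_two (fun x _ => pEx_pos x) (hhalf b) hb
    simp only [hlen, ← Finset.sum_mul, sum_univ_pEx]
    norm_num
  · refine ⟨![[true, true, true], [true, true, false], [true, false], [false]],
      ⟨Function.Injective.injOn (by decide), by decide⟩, ?_⟩
    simp [Fin.sum_univ_four, pEx]
    norm_num
end
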